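/- For any ideal I on a countable set, the following are equivalent: (1) I is not weakly Ramsey; (2) I contains an isomorphic copy of WR (WR ⊑ I); (3) WR is below I in the Katětov order (WR ≤_K I). -/

import Mathlib

open Set

/-- `I` is an ideal on `α`: closed under subsets and finite unions,
contains all finite sets, and is not all of `P(α)`. -/
def IsIdealOn {α : Type*} (I : Set (Set α)) : Prop :=
  (∀ A ∈ I, ∀ B : Set α, B ⊆ A → B ∈ I) ∧
  (∀ A ∈ I, ∀ B ∈ I, A ∪ B ∈ I) ∧
  (∀ A : Set α, A.Finite → A ∈ I) ∧
  (Set.univ : Set α) ∉ I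

/-- Generator of the first type of `WR`: a vertical line. -/
def WRgen1 (S : Set (ℕ × ℕ)) : Prop := ∃ i, S = {p : ℕ × ℕ | p.1 = i}

/-- Generator of the second type of `WR`. -/
def WRgen2 (S : Set (ℕ × ℕ)) : Prop :=
  ∀ p ∈ S, ∀ q ∈ S, p ≠ q → p.1 > q.1 + q.2 ∨ q.1 > p.1 + p.2

/-- The ideal `WR`: sets covered by finitely many generators. -/
def WR : Set (Set (ℕ × ℕ)) :=
  {A | ∃ C : Finset (Set (ℕ × ℕ)), (∀ S ∈ C, WRgen1 S ∨ WRgen2 S) ∧ A ⊆ ⋃₀ ↑C}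

/-- Generator of `ED↑`: a vertical line or the graph of a nondecreasing function. -/
def EDgen (S : Set (ℕ × ℕ)) : Prop :=
  (∃ i, S = {p : ℕ × ℕ | p.1 = i}) ∨
  (∃ f : ℕ → ℕ, Monotone f ∧ S = {p : ℕ × ℕ | p.2 = f p.1})

/-- The ideal `ED↑`. -/
def EDup : Set (Set (ℕ × ℕ)) :=
  {A | ∃ C : Finset (Set (ℕ × ℕ)), (∀ S ∈ C, EDgen S) ∧ A ⊆ ⋃₀ ↑C}

/-- A tree of finite sequences: closed under taking prefixes. -/
def IsTree {α : Type*} (T : Set (List α)) : Prop :=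
  ∀ s ∈ T, ∀ t : List α, t <+: s → t ∈ T

/-- `I` is weakly Ramsey: every (nonempty) tree all of whose ramifications
belong to the dual filter `I*` has a branch with `I`-positive range. -/
def WeaklyRamsey {α : Type*} (I : Set (Set α)) : Prop :=
  ∀ T : Set (List α), ([] : List α) ∈ T → IsTree T →
    (∀ s ∈ T, {x : α | s ++ [x] ∈ T}ᶜ ∈ I) →
    ∃ b : ℕ → α, (∀ k, (List.range k).map b ∈ T) ∧ Set.range b ∉ I

/-- `(X n)` is a partition of `α`. -/
def IsPartition {α : Type*} (X : ℕ → Set α) : Prop :=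
  (∀ m n, m ≠ n → Disjoint (X m) (X n)) ∧ (⋃ n, X n) = Set.univ

/-- `S` is a selector: it meets each piece in at most one point. -/
def IsSelector {α : Type*} (X : ℕ → Set α) (S : Set α) : Prop :=
  ∀ n, (S ∩ X n).Subsingleton

/-- Locally selective: every partition into sets from `I` has an `I`-positive selector. -/
def LocallySelective {α : Type*} (I : Set (Set α)) : Prop :=
  ∀ X : ℕ → Set α, IsPartition X → (∀ n, X n ∈ I) →
    ∃ S : Set α, IsSelector X S ∧ S ∉ I

/-- Weakly selective. -/
def WeaklySelective {α : Type*} (I : Set (Set α)) : Prop :=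
  ∀ X : ℕ → Set α, IsPartition X → {n | X n ∉ I}.Subsingleton →
    (∀ n, (⋃ m, ⋃ _ : n ≤ m, X m) ∉ I) →
    ∃ S : Set α, IsSelector X S ∧ S ∉ I

/-!
If `f` witnesses `WR ≤_K I`, consider the tree of finite sequences along which each point's
first `f`-coordinate exceeds the sum of the `f`-coordinates of every earlier point. The
complement of a ramification is covered by the preimages of finitely many vertical lines, and
every branch maps into a generator of the second kind, so `I` is not weakly Ramsey.

Conversely, take an `I*`-tree `T` whose branches all have range in `I`, and an injective branch
`u` of it, whose points serve as fillers. Enumerate `X` along `Nat.pair`, filling position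
`(i, j)`, `j ≠ 0`, with the first unused point of level `i`: a point lying in `D i` but not in
`D (i + 1)`, where `D k = admissibleSet k ∈ I*` collects the points of index at least `k` that
extend every node of `T` made of the first `prefixBound k` enumerated points, those up to
position `(k - 1, 0)`. Every point has a level and is eventually enumerated. Column `i` then
lies in `range u ∪ (D (i + 1))ᶜ`, and the points of a generator of the second kind lying in `D`
of their column form a branch of `T`.
-/

open Function

namespace IsIdealOn

variable {α : Type*} {I : Set (Set α)}

theorem mono (hI : IsIdealOn I) {A B : Set α} (hA : A ∈ I) (hBA : B ⊆ A) : B ∈ I :=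
  hI.1 A hA B hBA

theorem union_mem (hI : IsIdealOn I) {A B : Set α} (hA : A ∈ I) (hB : B ∈ I) : A ∪ B ∈ I :=
  hI.2.1 A hA B hB

theorem finite_mem (hI : IsIdealOn I) {A : Set α} (hA : A.Finite) : A ∈ I :=
  hI.2.2.1 A hA

theorem biUnion_mem (hI : IsIdealOn I) {ι : Type*} {s : Set ι} (hs : s.Finite) {A : ι → Set α}
    (hA : ∀ i ∈ s, A i ∈ I) : ⋃ i ∈ s, A i ∈ I := by
  induction s, hs using Set.Finite.induction_on with
  | empty => simpa using hI.finite_mem finite_empty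
  | insert _ _ ih =>
    rw [biUnion_insert]
    exact hI.union_mem (hA _ (mem_insert _ _)) (ih fun i hi => hA i (mem_insert_of_mem _ hi))

theorem infinite_of_compl_mem (hI : IsIdealOn I) {A : Set α} (hA : Aᶜ ∈ I) : A.Infinite :=
  fun hfin => hI.2.2.2 <| by simpa using hI.union_mem (hI.finite_mem hfin) hA

end IsIdealOn

theorem mem_WR_of_WRgen2 {S : Set (ℕ × ℕ)} (hS : WRgen2 S) : S ∈ WR :=
  ⟨{S}, by simp [hS], by simp⟩

theorem setOf_fst_le_mem_WR (N : ℕ) : {p : ℕ × ℕ | p.1 ≤ N} ∈ WR := by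
  classical
  refine ⟨(Finset.range (N + 1)).image fun i => {p | p.1 = i}, ?_, ?_⟩
  · simp only [Finset.mem_image]
    rintro _ ⟨i, -, rfl⟩
    exact Or.inl ⟨i, rfl⟩
  · intro p hp
    exact mem_sUnion.2 ⟨{q | q.1 = p.1},
      Finset.mem_image.2 ⟨p.1, Finset.mem_range.2 (Nat.lt_succ_of_le hp), rfl⟩, rfl⟩

theorem preimage_mem_of_WRgen {α : Type*} {I : Set (Set α)} (hI : IsIdealOn I)
    {f : α → ℕ × ℕ} (h₁ : ∀ i, f ⁻¹' {p | p.1 = i} ∈ I) (h₂ : ∀ S, WRgen2 S → f ⁻¹' S ∈ I) :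
    ∀ A ∈ WR, f ⁻¹' A ∈ I := by
  rintro A ⟨C, hC, hAC⟩
  refine hI.mono ?_ (preimage_mono hAC)
  rw [sUnion_eq_biUnion, preimage_iUnion₂]
  refine hI.biUnion_mem C.finite_toSet fun S hS => ?_
  rcases hC S hS with ⟨i, rfl⟩ | hS
  exacts [h₁ i, h₂ S hS]

section FirstWith

variable {α : Type*}

open Classical in
noncomputable def firstWith (u : ℕ → α) (x₀ : α) (p : α → Prop) : α :=
  if h : ∃ n, p (u n) then u (Nat.find h) else x₀

theorem firstWith_spec {u : ℕ → α} {x₀ : α} {p : α → Prop} (h : ∃ n, p (u n)) :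
    p (firstWith u x₀ p) := by
  classical
  rw [firstWith, dif_pos h]
  exact Nat.find_spec h

theorem firstWith_mem_range {u : ℕ → α} {x₀ : α} {p : α → Prop} (h : ∃ n, p (u n)) :
    firstWith u x₀ p ∈ range u := by
  classical
  rw [firstWith, dif_pos h]
  exact mem_range_self _

theorem exists_le_firstWith_eq {u : ℕ → α} {x₀ : α} {p : α → Prop} {N : ℕ} (hN : p (u N)) :
    ∃ n ≤ N, firstWith u x₀ p = u n := by
  classical
  rw [firstWith, dif_pos ⟨N, hN⟩]
  exact ⟨_, Nat.find_min' _ hN, rfl⟩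

theorem not_injective_firstWith {u : ℕ → α} {x₀ : ℕ → α} {p : ℕ → α → Prop} {N : ℕ}
    (hN : ∀ k, p k (u N)) : ¬ Injective fun k => firstWith u (x₀ k) (p k) := fun hinj =>
  infinite_range_of_injective hinj <| ((finite_Iic N).image u).subset <| by
    rintro _ ⟨k, rfl⟩
    obtain ⟨n, hn, h⟩ := exists_le_firstWith_eq (x₀ := x₀ k) (hN k)
    exact ⟨n, hn, h.symm⟩

end FirstWith

section Greedy

variable {α : Type*} (next : List α → α)

def greedyPrefix : ℕ → List α
  | 0 => []
  | n + 1 => greedyPrefix n ++ [next (greedyPrefix n)]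

def greedySeq (n : ℕ) : α := next (greedyPrefix next n)

theorem greedyPrefix_eq_map (n : ℕ) :
    greedyPrefix next n = (List.range n).map (greedySeq next) := by
  induction n with
  | zero => rfl
  | succ n ih => rw [List.range_succ, List.map_append, ← ih]; rfl

@[simp]
theorem length_greedyPrefix (n : ℕ) : (greedyPrefix next n).length = n := by
  simp [greedyPrefix_eq_map]

theorem mem_greedyPrefix {x : α} {n : ℕ} :
    x ∈ greedyPrefix next n ↔ ∃ m < n, greedySeq next m = x := by
  simp [greedyPrefix_eq_map]

theorem greedyPrefix_take {m n : ℕ} (h : m ≤ n) :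
    (greedyPrefix next n).take m = greedyPrefix next m := by
  rw [greedyPrefix_eq_map, greedyPrefix_eq_map, ← List.map_take, List.take_range, min_eq_left h]

theorem greedySeq_injective (hfresh : ∀ n, greedySeq next n ∉ greedyPrefix next n) :
    Injective (greedySeq next) := by
  have hne : ∀ m n, m < n → greedySeq next m ≠ greedySeq next n := fun m n hmn heq =>
    hfresh n <| (mem_greedyPrefix next).2 ⟨m, hmn, heq⟩
  intro m n h
  by_contra hmn
  rcases Nat.lt_or_gt_of_ne hmn with hlt | hlt
  exacts [hne m n hlt h, hne n m hlt h.symm]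

end Greedy

def prefixBound : ℕ → ℕ
  | 0 => 0
  | k + 1 => Nat.pair k 0 + 1

theorem prefixBound_mono : Monotone prefixBound :=
  monotone_nat_of_le_succ fun
    | 0 => Nat.zero_le _
    | k + 1 => Nat.succ_le_succ (Nat.pair_lt_pair_left 0 k.lt_succ_self).le

theorem prefixBound_le_pair (i j : ℕ) : prefixBound i ≤ Nat.pair i j := by
  cases i with
  | zero => exact Nat.zero_le _
  | succ k =>
    calc prefixBound (k + 1) ≤ Nat.pair (k + 1) 0 := Nat.pair_lt_pair_left 0 k.lt_succ_self
      _ ≤ Nat.pair (k + 1) j := by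
        rcases (Nat.zero_le j).eq_or_lt with rfl | hj
        exacts [le_rfl, (Nat.pair_lt_pair_right _ hj).le]

theorem prefixBound_succ_le_pair (i : ℕ) {j : ℕ} (hj : j ≠ 0) :
    prefixBound (i + 1) ≤ Nat.pair i j :=
  Nat.pair_lt_pair_right i (Nat.pos_of_ne_zero hj)

theorem pair_lt_prefixBound (i j : ℕ) : Nat.pair i j < prefixBound (i + j + 1) := by
  rw [prefixBound, Nat.lt_succ_iff]
  unfold Nat.pair
  split_ifs <;> nlinarith

theorem lt_prefixBound_of_WRgen2 {S : Set (ℕ × ℕ)} (hS : WRgen2 S) {n m : ℕ}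
    (hn : Nat.unpair n ∈ S) (hm : Nat.unpair m ∈ S) (hnm : n < m) :
    n < prefixBound (Nat.unpair m).1 := by
  have hne : Nat.unpair n ≠ Nat.unpair m := fun h => hnm.ne <| by
    rw [← Nat.pair_unpair n, ← Nat.pair_unpair m, h]
  have hlt : ∀ k, k < prefixBound ((Nat.unpair k).1 + (Nat.unpair k).2 + 1) := fun k => by
    simpa only [Nat.pair_unpair] using pair_lt_prefixBound (Nat.unpair k).1 (Nat.unpair k).2
  rcases hS _ hn _ hm hne with h | h
  · have hm_lt : m < prefixBound (Nat.unpair n).1 := (hlt m).trans_le (prefixBound_mono h)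
    have hn_ge := prefixBound_le_pair (Nat.unpair n).1 (Nat.unpair n).2
    rw [Nat.pair_unpair] at hn_ge
    omega
  · exact (hlt n).trans_le (prefixBound_mono h)

section Trees

variable {X : Type*} {I : Set (Set X)} {T : Set (List X)}

structure IsIStarTree (I : Set (Set X)) (T : Set (List X)) : Prop where
  nil_mem : [] ∈ T
  compl_ramification_mem : ∀ s ∈ T, {x | s ++ [x] ∈ T}ᶜ ∈ I

def IsBranch (T : Set (List X)) (b : ℕ → X) : Prop := ∀ k, (List.range k).map b ∈ T

def ExtendsSublists (T : Set (List X)) (l : List X) (y : X) : Prop :=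
  ∀ σ, σ.Sublist l → σ ∈ T → σ ++ [y] ∈ T

namespace IsIStarTree

theorem exists_fresh_succ (hI : IsIdealOn I) (hT : IsIStarTree I T) {s : List X} (hs : s ∈ T) :
    ∃ x, s ++ [x] ∈ T ∧ x ∉ s :=
  ((hI.infinite_of_compl_mem (hT.compl_ramification_mem s hs)).sdiff s.finite_toSet).nonempty

theorem exists_injective_branch (e : ℕ ≃ X) (hI : IsIdealOn I) (hT : IsIStarTree I T) :
    ∃ u : ℕ → X, Injective u ∧ IsBranch T u := by
  set next : List X → X := fun s => firstWith e (e 0) fun x => s ++ [x] ∈ T ∧ x ∉ s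
  have hnext : ∀ s ∈ T, s ++ [next s] ∈ T ∧ next s ∉ s := fun s hs => by
    obtain ⟨x, hx⟩ := hT.exists_fresh_succ hI hs
    exact firstWith_spec (p := fun x => s ++ [x] ∈ T ∧ x ∉ s) ⟨e.symm x, by simpa using hx⟩
  have hmem : ∀ n, greedyPrefix next n ∈ T := fun n => by
    induction n with
    | zero => exact hT.nil_mem
    | succ n ih => exact (hnext _ ih).1
  refine ⟨greedySeq next, greedySeq_injective next fun n => (hnext _ (hmem n)).2, fun k => ?_⟩
  rw [← greedyPrefix_eq_map]
  exact hmem k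

theorem compl_setOf_extendsSublists_mem (hI : IsIdealOn I) (hT : IsIStarTree I T)
    (l : List X) : {y | ExtendsSublists T l y}ᶜ ∈ I := by
  have hfin : {σ | σ ∈ l.sublists ∧ σ ∈ T}.Finite :=
    l.sublists.finite_toSet.subset fun σ hσ => hσ.1
  refine hI.mono (hI.biUnion_mem hfin fun σ hσ => hT.compl_ramification_mem σ hσ.2) ?_
  intro y hy
  simp only [ExtendsSublists, mem_compl_iff, mem_ofPred_eq, not_forall] at hy
  obtain ⟨σ, hσl, hσT, hσy⟩ := hy
  exact mem_biUnion ⟨List.mem_sublists.2 hσl, hσT⟩ hσy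

end IsIStarTree

theorem isBranch_comp_nth {g : ℕ → X} {p : ℕ → Prop} (hp : {n | p n}.Infinite)
    (hT : [] ∈ T) (L : ℕ → ℕ) (hL : ∀ m n, p m → p n → n < m → n < L m)
    (hext : ∀ m, p m → ExtendsSublists T ((List.range (L m)).map g) (g m)) :
    IsBranch T (g ∘ Nat.nth p) := by
  have hmono := Nat.nth_strictMono hp
  intro k
  induction k with
  | zero => simpa using hT
  | succ k ih =>
    have hk := Nat.nth_mem_of_infinite hp k
    rw [List.range_succ, List.map_append, ← List.map_map]
    rw [← List.map_map] at ih
    refine hext _ hk _ (List.Sublist.map g ?_) ih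
    have hsorted : ((List.range k).map (Nat.nth p)).Pairwise (· < ·) :=
      List.pairwise_lt_range.map _ fun _ _ h => hmono h
    refine List.sublist_of_subperm_of_pairwise (List.subperm_of_subset hsorted.nodup ?_)
      hsorted List.pairwise_lt_range
    simp only [List.subset_def, List.mem_map, List.mem_range]
    rintro _ ⟨r, hr, rfl⟩
    exact hL _ _ hk (Nat.nth_mem_of_infinite hp r) (hmono hr)

end Trees

def IsLevel {X : Type*} (D : ℕ → Set X) (i : ℕ) (y : X) : Prop :=
  y ∉ D (i + 1) ∧ (i = 0 ∨ y ∈ D i)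

theorem exists_isLevel {X : Type*} {D : ℕ → Set X} {y : X} (h : ∃ k, y ∉ D (k + 1)) :
    ∃ i, IsLevel D i y := by
  classical
  refine ⟨Nat.find h, Nat.find_spec h, ?_⟩
  rcases hk : Nat.find h with _ | k
  · exact Or.inl rfl
  · exact Or.inr (not_not.1 (Nat.find_min h (hk ▸ k.lt_succ_self)))

namespace WRCopy

variable {X : Type*} (e : ℕ ≃ X) (u : ℕ → X) (T : Set (List X))

/-- The bound `k ≤ e.symm y` makes these sets shrink to `∅`, so that every point gets a level. -/
def admissible (l : List X) (k : ℕ) : Set X :=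
  {y | ExtendsSublists T (l.take (prefixBound k)) y ∧ k ≤ e.symm y}

def IsCandidate (l : List X) (y : X) : Prop :=
  y ∉ l ∧ IsLevel (admissible e T l) (Nat.unpair l.length).1 y

noncomputable def filler (l : List X) : X := firstWith u (e 0) (· ∉ l)

/-- Positions `Nat.pair i 0` get fillers: the level-`i` test needs `admissibleSet (i + 1)`,
which is fixed only after them. -/
noncomputable def next (l : List X) : X :=
  if (Nat.unpair l.length).2 = 0 then filler e u l
  else firstWith e (filler e u l) (IsCandidate e T l)

noncomputable def enum : ℕ → X := greedySeq (next e u T)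

noncomputable def enumPrefix : ℕ → List X := greedyPrefix (next e u T)

noncomputable def admissibleSet (k : ℕ) : Set X :=
  admissible e T (enumPrefix e u T (prefixBound k)) k

variable {e u T}

theorem admissible_enumPrefix {k n : ℕ} (h : prefixBound k ≤ n) :
    admissible e T (enumPrefix e u T n) k = admissibleSet e u T k := by
  simp only [admissibleSet, admissible, enumPrefix, greedyPrefix_take _ h,
    greedyPrefix_take _ le_rfl]

theorem enumPrefix_eq_map (n : ℕ) : enumPrefix e u T n = (List.range n).map (enum e u T) :=
  greedyPrefix_eq_map _ n

@[simp]
theorem length_enumPrefix (n : ℕ) : (enumPrefix e u T n).length = n :=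
  length_greedyPrefix _ n

theorem isCandidate_enumPrefix_pair_iff {i j : ℕ} (hj : j ≠ 0) {y : X} :
    IsCandidate e T (enumPrefix e u T (Nat.pair i j)) y ↔
      y ∉ enumPrefix e u T (Nat.pair i j) ∧ IsLevel (admissibleSet e u T) i y := by
  rw [IsCandidate, length_enumPrefix, Nat.unpair_pair, IsLevel, IsLevel,
    admissible_enumPrefix (prefixBound_le_pair i j),
    admissible_enumPrefix (prefixBound_succ_le_pair i hj)]

theorem enum_eq_firstWith {n : ℕ} (hn : (Nat.unpair n).2 ≠ 0) :
    enum e u T n =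
      firstWith e (filler e u (enumPrefix e u T n)) (IsCandidate e T (enumPrefix e u T n)) := by
  rw [enum, greedySeq, next, length_greedyPrefix, if_neg hn]
  rfl

theorem filler_spec (hu : Injective u) (l : List X) :
    filler e u l ∉ l ∧ filler e u l ∈ range u := by
  have h : ∃ r, u r ∉ l := by
    by_contra! h
    exact infinite_range_of_injective hu (l.finite_toSet.subset (range_subset_iff.2 h))
  exact ⟨firstWith_spec (p := (· ∉ l)) h, firstWith_mem_range h⟩

theorem next_spec (hu : Injective u) (l : List X) :
    next e u T l ∉ l ∧ (next e u T l ∈ range u ∨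
      ((Nat.unpair l.length).2 ≠ 0 ∧ IsCandidate e T l (next e u T l))) := by
  classical
  unfold next
  split_ifs with hj
  · exact ⟨(filler_spec hu l).1, Or.inl (filler_spec hu l).2⟩
  · by_cases h : ∃ m, IsCandidate e T l (e m)
    · have := firstWith_spec (x₀ := filler e u l) h
      exact ⟨this.1, Or.inr ⟨hj, this⟩⟩
    · rw [firstWith, dif_neg h]
      exact ⟨(filler_spec hu l).1, Or.inl (filler_spec hu l).2⟩

theorem enum_injective (hu : Injective u) : Injective (enum e u T) :=
  greedySeq_injective _ fun _ => (next_spec hu _).1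

theorem enum_pair_mem_range_or_isLevel (hu : Injective u) (i j : ℕ) :
    enum e u T (Nat.pair i j) ∈ range u ∨
      IsLevel (admissibleSet e u T) i (enum e u T (Nat.pair i j)) := by
  rcases (next_spec (T := T) hu (enumPrefix e u T (Nat.pair i j))).2 with h | ⟨hj, hcand⟩
  · exact Or.inl h
  · rw [length_enumPrefix, Nat.unpair_pair] at hj
    exact Or.inr ((isCandidate_enumPrefix_pair_iff hj).1 hcand).2

/-- A point never enumerated would be a candidate at every position of its level's column,
so the first candidates there could not all be distinct. -/
theorem enum_surjective (hu : Injective u) : Surjective (enum e u T) := by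
  intro y
  obtain ⟨i, hi⟩ : ∃ i, IsLevel (admissibleSet e u T) i y :=
    exists_isLevel ⟨e.symm y, fun h => (Nat.lt_succ_self _).not_ge h.2⟩
  by_contra! hy
  have hinj : Injective fun j => enum e u T (Nat.pair i (j + 1)) :=
    (enum_injective hu).comp fun j j' h => by simpa using (Nat.pair_eq_pair.1 h).2
  refine not_injective_firstWith (u := e) (N := e.symm y)
    (x₀ := fun j => filler e u (enumPrefix e u T (Nat.pair i (j + 1))))
    (p := fun j => IsCandidate e T (enumPrefix e u T (Nat.pair i (j + 1)))) (fun j => ?_) ?_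
  · rw [e.apply_symm_apply, isCandidate_enumPrefix_pair_iff j.succ_ne_zero]
    refine ⟨fun h => ?_, hi⟩
    obtain ⟨m, -, hm⟩ := (mem_greedyPrefix _).1 h
    exact hy m hm
  · convert hinj using 2 with j
    exact (enum_eq_firstWith (by simp)).symm

variable {I : Set (Set X)}

variable (e u) in
theorem compl_admissibleSet_mem (hI : IsIdealOn I) (hT : IsIStarTree I T) (k : ℕ) :
    (admissibleSet e u T k)ᶜ ∈ I := by
  let l := (enumPrefix e u T (prefixBound k)).take (prefixBound k)
  refine hI.mono (hI.union_mem (hT.compl_setOf_extendsSublists_mem hI l)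
    (hI.finite_mem ((finite_Iio k).image e))) ?_
  intro y hy
  simp only [admissibleSet, admissible, mem_compl_iff, mem_ofPred_eq, not_and_or, not_le] at hy
  rcases hy with h | h
  exacts [Or.inl h, Or.inr ⟨e.symm y, h, e.apply_symm_apply y⟩]

theorem image_column_mem (hI : IsIdealOn I) (hT : IsIStarTree I T) (hu : Injective u)
    (huI : range u ∈ I) (i : ℕ) : enum e u T '' (Nat.unpair ⁻¹' {p | p.1 = i}) ∈ I := by
  refine hI.mono (hI.union_mem huI (compl_admissibleSet_mem e u hI hT (i + 1))) ?_
  rintro _ ⟨n, hn, rfl⟩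
  obtain ⟨j, rfl⟩ : ∃ j, n = Nat.pair i j := ⟨(Nat.unpair n).2, by rw [← hn, Nat.pair_unpair]⟩
  rcases enum_pair_mem_range_or_isLevel hu i j with h | h
  exacts [Or.inl h, Or.inr h.1]

/-- The points enumerated inside their admissible set form a branch: by `WRgen2`, earlier
ones are among the terms each later one was required to extend. -/
theorem image_WRgen2_mem (hI : IsIdealOn I) (hT : IsIStarTree I T) (hu : Injective u)
    (huI : range u ∈ I) (hbr : ∀ b, IsBranch T b → range b ∈ I) {S : Set (ℕ × ℕ)}
    (hS : WRgen2 S) : enum e u T '' (Nat.unpair ⁻¹' S) ∈ I := by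
  set p : ℕ → Prop :=
    fun n => Nat.unpair n ∈ S ∧ enum e u T n ∈ admissibleSet e u T (Nat.unpair n).1
  have hK : enum e u T '' {n | p n} ∈ I := by
    by_cases hfin : {n | p n}.Finite
    · exact hI.finite_mem (hfin.image _)
    · have hext : ∀ m, p m → ExtendsSublists T
          ((List.range (prefixBound (Nat.unpair m).1)).map (enum e u T)) (enum e u T m) :=
        fun m hm => by simpa only [← enumPrefix_eq_map, admissible, enumPrefix,
          greedyPrefix_take _ le_rfl] using hm.2.1
      have := hbr _ (isBranch_comp_nth hfin hT.nil_mem _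
        (fun m n hm hn hnm => lt_prefixBound_of_WRgen2 hS hn.1 hm.1 hnm) hext)
      rwa [range_comp, Nat.range_nth_of_infinite hfin] at this
  refine hI.mono (hI.union_mem (hI.union_mem huI (compl_admissibleSet_mem e u hI hT 0)) hK) ?_
  rintro _ ⟨n, hn, rfl⟩
  obtain ⟨i, j, rfl⟩ : ∃ i j, n = Nat.pair i j := ⟨_, _, (Nat.pair_unpair n).symm⟩
  have hp : ∀ {k}, enum e u T (Nat.pair i j) ∈ admissibleSet e u T k → k = i →
      enum e u T (Nat.pair i j) ∈ enum e u T '' {n | p n} := fun h hk =>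
    ⟨_, ⟨hn, by simpa [hk] using h⟩, rfl⟩
  rcases enum_pair_mem_range_or_isLevel hu i j with h | ⟨-, rfl | h⟩
  · exact Or.inl (Or.inl h)
  · by_cases h0 : enum e u T (Nat.pair 0 j) ∈ admissibleSet e u T 0
    exacts [Or.inr (hp h0 rfl), Or.inl (Or.inr h0)]
  · exact Or.inr (hp h rfl)

end WRCopy

open WRCopy in
theorem IsIStarTree.exists_equiv_WR {X : Type*} {I : Set (Set X)} {T : Set (List X)}
    (hT : IsIStarTree I T) (e : ℕ ≃ X) (hI : IsIdealOn I)
    (hbr : ∀ b, IsBranch T b → range b ∈ I) :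
    ∃ f : X ≃ ℕ × ℕ, ∀ A ∈ WR, ⇑f ⁻¹' A ∈ I := by
  obtain ⟨u, hu, hub⟩ := hT.exists_injective_branch e hI
  let g : ℕ ≃ X := Equiv.ofBijective (enum e u T) ⟨enum_injective hu, enum_surjective hu⟩
  have hpre : ∀ S, ⇑(g.symm.trans Nat.pairEquiv.symm) ⁻¹' S = enum e u T '' (Nat.unpair ⁻¹' S) :=
    fun S => by rw [Equiv.coe_trans, preimage_comp, ← Equiv.image_eq_preimage_symm]; rfl
  refine ⟨g.symm.trans Nat.pairEquiv.symm, preimage_mem_of_WRgen hI (fun i => ?_) fun S hS => ?_⟩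
  · rw [hpre]
    exact image_column_mem hI hT hu (hbr u hub) i
  · rw [hpre]
    exact image_WRgen2_mem hI hT hu (hbr u hub) hbr hS

theorem exists_equiv_WR_of_not_weaklyRamsey {X : Type*} [Countable X] {I : Set (Set X)}
    (hI : IsIdealOn I) (h : ¬ WeaklyRamsey I) : ∃ f : X ≃ ℕ × ℕ, ∀ A ∈ WR, ⇑f ⁻¹' A ∈ I := by
  simp only [WeaklyRamsey, not_forall, not_exists, not_and, not_not, exists_prop] at h
  obtain ⟨T, hT0, -, hram, hbr⟩ := h
  have : Infinite X := infinite_univ_iff.1 <| hI.infinite_of_compl_mem <| by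
    simpa using hI.finite_mem finite_empty
  obtain ⟨e⟩ : Nonempty (ℕ ≃ X) := nonempty_equiv_of_countable
  exact IsIStarTree.exists_equiv_WR ⟨hT0, hram⟩ e hI hbr

theorem not_weaklyRamsey_of_WR_le {Y : Type*} {J : Set (Set Y)} (hJ : IsIdealOn J)
    {f : Y → ℕ × ℕ} (hf : ∀ A ∈ WR, f ⁻¹' A ∈ J) : ¬ WeaklyRamsey J := by
  let R : Y → Y → Prop := fun x y => (f x).1 + (f x).2 < (f y).1
  have hsnoc : ∀ s x, (s ++ [x]).Pairwise R ↔ s.Pairwise R ∧ ∀ y ∈ s, R y x := by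
    simp [List.pairwise_append]
  have hram : ∀ s ∈ {s : List Y | s.Pairwise R}, {x | s ++ [x] ∈ {s | s.Pairwise R}}ᶜ ∈ J := by
    intro s hs
    refine hJ.mono (hJ.biUnion_mem s.finite_toSet
      fun y _ => hf _ (setOf_fst_le_mem_WR ((f y).1 + (f y).2))) ?_
    intro x hx
    simp only [mem_compl_iff, mem_ofPred_eq, hsnoc, not_and, not_forall] at hx
    obtain ⟨y, hy, hxy⟩ := hx hs
    exact mem_biUnion hy (not_lt.1 hxy)
  intro hWR
  obtain ⟨b, hb, hbJ⟩ := hWR _ List.Pairwise.nil (fun s hs t ht => hs.sublist ht.sublist) hram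
  have hR : ∀ m n, m < n → R (b m) (b n) := fun m n hmn => by
    have := hb (n + 1)
    rw [List.range_succ, List.map_append, List.map_singleton] at this
    exact ((hsnoc _ _).1 this).2 _ (List.mem_map_of_mem (List.mem_range.2 hmn))
  have hS : WRgen2 (range (f ∘ b)) := by
    rintro _ ⟨m, rfl⟩ _ ⟨n, rfl⟩ hne
    rcases lt_trichotomy m n with h | rfl | h
    exacts [Or.inr (hR m n h), absurd rfl hne, Or.inl (hR n m h)]
  exact hbJ (hJ.mono (hf _ (mem_WR_of_WRgen2 hS)) (range_subset_iff.2 fun m => ⟨m, rfl⟩))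

theorem weaklyRamsey_characterization {X : Type*} [Countable X]
    (I : Set (Set X)) (hI : IsIdealOn I) :
    (¬ WeaklyRamsey I ↔ ∃ f : X ≃ (ℕ × ℕ), ∀ A ∈ WR, ⇑f ⁻¹' A ∈ I) ∧
    (¬ WeaklyRamsey I ↔ ∃ f : X → ℕ × ℕ, ∀ A ∈ WR, f ⁻¹' A ∈ I) :=
  ⟨⟨exists_equiv_WR_of_not_weaklyRamsey hI, fun ⟨_, hf⟩ => not_weaklyRamsey_of_WR_le hI hf⟩,
    ⟨fun h => let ⟨f, hf⟩ := exists_equiv_WR_of_not_weaklyRamsey hI h; ⟨f, hf⟩,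
      fun ⟨_, hf⟩ => not_weaklyRamsey_of_WR_le hI hf⟩⟩
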